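/- Given a commutative diagram of cochain complexes with exact rows 0 → X → Y → Z → 0 and 0 → X₁ → Y₁ → Z₁ → 0 and vertical maps α : X → X₁, β : Y → Y₁, γ : Z → Z₁, there is a distinguished triangle Cone(α) → Cone(β) → Cone(γ) → Cone(α)[1] in the derived category. -/

import Mathlib

open CategoryTheory CategoryTheory.Pretriangulated CochainComplex
open CategoryTheory.Limits

section Aux

variable {A : Type*} [Category A] [Abelian A]

lemma biprod_map_comp_zero (S T : ShortComplex A) :
    biprod.map S.f T.f ≫ biprod.map S.g T.g = 0 := by
  apply biprod.hom_ext
  · simp [S.zero]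
  · simp [T.zero]

lemma biprod_shortExact {S T : ShortComplex A} (hS : S.ShortExact) (hT : T.ShortExact) :
    (ShortComplex.mk (biprod.map S.f T.f) (biprod.map S.g T.g)
      (biprod_map_comp_zero S T)).ShortExact := by
  have := hS.mono_f
  have := hT.mono_f
  have := hS.epi_g
  have := hT.epi_g
  refine ShortComplex.ShortExact.mk' ?_ ?_ ?_
  · rw [ShortComplex.exact_iff_exact_up_to_refinements]
    intro Z x hx
    obtain ⟨Z₁, π₁, hπ₁, a, ha⟩ := hS.exact.exact_up_to_refinements (x ≫ biprod.fst)
      (by simpa using hx =≫ biprod.fst)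
    obtain ⟨Z₂, π₂, hπ₂, b, hb⟩ := hT.exact.exact_up_to_refinements (x ≫ biprod.snd)
      (by simpa using hx =≫ biprod.snd)
    refine ⟨pullback π₁ π₂, pullback.fst π₁ π₂ ≫ π₁, epi_comp _ _,
      biprod.lift (pullback.fst π₁ π₂ ≫ a) (pullback.snd π₁ π₂ ≫ b), ?_⟩
    apply biprod.hom_ext
    · dsimp
      simp only [Category.assoc, biprod.map_fst, biprod.lift_fst_assoc]
      rw [ha]
    · dsimp
      simp only [Category.assoc, biprod.map_snd, biprod.lift_snd_assoc]
      rw [pullback.condition_assoc, hb]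
  · rw [Preadditive.mono_iff_cancel_zero]
    intro Z u hu
    apply biprod.hom_ext
    · rw [← cancel_mono S.f]
      simpa using hu =≫ biprod.fst
    · rw [← cancel_mono T.f]
      simpa using hu =≫ biprod.snd
  · rw [Preadditive.epi_iff_cancel_zero]
    intro Z u hu
    apply biprod.hom_ext'
    · rw [← cancel_epi S.g]
      simpa using biprod.inl ≫= hu
    · rw [← cancel_epi T.g]
      simpa using biprod.inr ≫= hu

variable {K L : CochainComplex A ℤ}

/-- The degreewise biproduct decomposition of a mapping cone. -/
noncomputable def coneXIso (φ : K ⟶ L) (n : ℤ) :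
    (mappingCone φ).X n ≅ K.X (n + 1) ⊞ L.X n where
  hom := biprod.lift ((mappingCone.fst φ : HomComplex.Cochain (mappingCone φ) K 1).v n (n + 1) rfl)
    ((mappingCone.snd φ).v n n (add_zero n))
  inv := biprod.desc ((mappingCone.inl φ).v (n + 1) n (by omega)) ((mappingCone.inr φ).f n)
  hom_inv_id := by
    rw [mappingCone.ext_from_iff φ (n + 1) n rfl]
    constructor <;> simp
  inv_hom_id := by
    apply biprod.hom_ext' <;> apply biprod.hom_ext <;> simp

lemma map_eq_zero_of_zero {K₁ L₁ K₂ L₂ : CochainComplex A ℤ} (φ₁ : K₁ ⟶ L₁) (φ₂ : K₂ ⟶ L₂)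
    (a : K₁ ⟶ K₂) (b : L₁ ⟶ L₂) (comm : φ₁ ≫ b = a ≫ φ₂) (ha : a = 0) (hb : b = 0) :
    mappingCone.map φ₁ φ₂ a b comm = 0 := by
  subst ha hb
  ext n
  rw [mappingCone.ext_from_iff φ₁ (n + 1) n rfl]
  constructor <;> simp [mappingCone.map]

end Aux

/-- Given a commutative diagram of cochain complexes with exact rows
`0 → X → Y → Z → 0` and `0 → X₁ → Y₁ → Z₁ → 0` and vertical maps `α, β, γ`, there is a
distinguished triangle `Cone(α) → Cone(β) → Cone(γ) → Cone(α)[1]` in the derived category. -/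
theorem statement2 {C : Type*} [Category C] [Abelian C] [HasDerivedCategory C]
    {X Y Z X₁ Y₁ Z₁ : CochainComplex C ℤ}
    (f : X ⟶ Y) (g : Y ⟶ Z) (hfg : f ≫ g = 0)
    (f₁ : X₁ ⟶ Y₁) (g₁ : Y₁ ⟶ Z₁) (hfg₁ : f₁ ≫ g₁ = 0)
    (hrow : (ShortComplex.mk f g hfg).ShortExact)
    (hrow₁ : (ShortComplex.mk f₁ g₁ hfg₁).ShortExact)
    (α : X ⟶ X₁) (β : Y ⟶ Y₁) (γ : Z ⟶ Z₁)
    (comm₁ : α ≫ f₁ = f ≫ β) (comm₂ : β ≫ g₁ = g ≫ γ) :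
    ∃ δ : DerivedCategory.Q.obj (mappingCone γ) ⟶
        (DerivedCategory.Q.obj (mappingCone α))⟦(1 : ℤ)⟧,
      Triangle.mk
        (DerivedCategory.Q.map (mappingCone.map α β f f₁ comm₁))
        (DerivedCategory.Q.map (mappingCone.map β γ g g₁ comm₂))
        δ ∈ distTriang (DerivedCategory C) := by
  have hzero : mappingCone.map α β f f₁ comm₁ ≫ mappingCone.map β γ g g₁ comm₂ = 0 := by
    rw [← mappingCone.map_comp]
    exact map_eq_zero_of_zero α γ _ _ _ hfg hfg₁
  set S : ShortComplex (CochainComplex C ℤ) :=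
    ShortComplex.mk _ _ hzero with hS
  have hrowd := (HomologicalComplex.shortExact_iff_degreewise_shortExact _).1 hrow
  have hrowd₁ := (HomologicalComplex.shortExact_iff_degreewise_shortExact _).1 hrow₁
  have hSE : S.ShortExact := by
    apply HomologicalComplex.shortExact_of_degreewise_shortExact
    intro n
    refine ShortComplex.shortExact_of_iso (Iso.symm ?_)
      (biprod_shortExact (hrowd (n + 1)) (hrowd₁ n))
    refine ShortComplex.isoMk (coneXIso α n) (coneXIso β n) (coneXIso γ n) ?_ ?_
    · show (coneXIso α n).hom ≫ biprod.map (f.f (n + 1)) (f₁.f n) =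
        (mappingCone.map α β f f₁ comm₁).f n ≫ (coneXIso β n).hom
      rw [mappingCone.ext_from_iff α (n + 1) n rfl]
      constructor <;> apply biprod.hom_ext <;>
        simp [coneXIso, mappingCone.map]
    · show (coneXIso β n).hom ≫ biprod.map (g.f (n + 1)) (g₁.f n) =
        (mappingCone.map β γ g g₁ comm₂).f n ≫ (coneXIso γ n).hom
      rw [mappingCone.ext_from_iff β (n + 1) n rfl]
      constructor <;> apply biprod.hom_ext <;>
        simp [coneXIso, mappingCone.map]
  exact ⟨DerivedCategory.triangleOfSESδ hSE, DerivedCategory.triangleOfSES_distinguished hSE⟩
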